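/- arXiv:2108.04757 — 2 statements merged into one kernel-verified Lean document; each statement's English description precedes it below -/
import Mathlib

section
/- Let M be a finite rank-4 loopless hypermodular matroid that is non-modular, and let 𝓜 be a modular cut of M containing at least one non-modular pair of flats. Then the following are equivalent: (1) 𝓜 is a proper modular cut; (2) 𝓜 is non-principal and, for every non-modular pair of flats contained in 𝓜, 𝓜 equals the modular cut generated by that pair; (3) 𝓜 contains no flat of rank ≤ 1; (4) the set of rank-2 flats belonging to 𝓜 is a partition of E(M) (the rank-2 flats in 𝓜 are pairwise disjoint and their union is E(M)). -/
open Set Matroid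
open scoped Matroid

namespace SMC

variable {α : Type*}

/-- The rank of a set `X` in a matroid `M`: the maximum cardinality of an
independent subset of `X` (intended for finite matroids). -/
noncomputable def rk (M : Matroid α) (X : Set α) : ℕ :=
  sSup {n | ∃ I, M.Indep I ∧ I ⊆ X ∧ I.ncard = n}

/-- The rank of a matroid: the rank of its ground set. -/
noncomputable def rkM (M : Matroid α) : ℕ := rk M M.E

/-- The modular defect of a pair of sets:
`r(X) + r(Y) - r(X ∪ Y) - r(X ∩ Y)` (a natural number). -/
noncomputable def pairDefect (M : Matroid α) (X Y : Set α) : ℕ :=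
  rk M X + rk M Y - rk M (X ∪ Y) - rk M (X ∩ Y)

/-- A pair of sets is a modular pair if its modular defect is zero. -/
def ModularPair (M : Matroid α) (X Y : Set α) : Prop := pairDefect M X Y = 0

/-- A matroid is modular if every pair of flats is a modular pair. -/
def Modular (M : Matroid α) : Prop :=
  ∀ F L : Set α, M.IsFlat F → M.IsFlat L → ModularPair M F L

/-- A matroid (of rank at least 3) is hypermodular if every pair of flats of
rank `r(M) - 1` is a modular pair. -/
def Hypermodular (M : Matroid α) : Prop :=
  ∀ F L : Set α, M.IsFlat F → M.IsFlat L →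
    rk M F + 1 = rkM M → rk M L + 1 = rkM M → ModularPair M F L

/-- A modular cut of `M`: a collection of flats that is upward closed and
closed under intersections of modular pairs. -/
def ModularCut (M : Matroid α) (𝓜 : Set (Set α)) : Prop :=
  (∀ F ∈ 𝓜, M.IsFlat F) ∧
  (∀ L ∈ 𝓜, ∀ F : Set α, M.IsFlat F → L ⊆ F → F ∈ 𝓜) ∧
  (∀ F ∈ 𝓜, ∀ L ∈ 𝓜, ModularPair M F L → F ∩ L ∈ 𝓜)

/-- A principal modular cut: the collection of all flats containing some fixed flat. -/
def PrincipalCut (M : Matroid α) (𝓜 : Set (Set α)) : Prop :=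
  ∃ F : Set α, M.IsFlat F ∧ 𝓜 = {L | M.IsFlat L ∧ F ⊆ L}

/-- The modular cut generated by a collection `S` of flats:
the smallest modular cut containing `S`. -/
def genCut (M : Matroid α) (S : Set (Set α)) : Set (Set α) :=
  ⋂₀ {𝓜 | ModularCut M 𝓜 ∧ S ⊆ 𝓜}

/-- A Vámos line arrangement in a rank-4 matroid: four pairwise disjoint rank-2
flats, the union of any three of which has rank 4, with `r(T₀ ∪ T₁) = 3`,
`r(Tᵢ ∪ Lⱼ) = 3` for all `i, j`, and `r(L₀ ∪ L₁) = 4`. -/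
def VamosQuad (M : Matroid α) (T₀ T₁ L₀ L₁ : Set α) : Prop :=
  M.IsFlat T₀ ∧ M.IsFlat T₁ ∧ M.IsFlat L₀ ∧ M.IsFlat L₁ ∧
  rk M T₀ = 2 ∧ rk M T₁ = 2 ∧ rk M L₀ = 2 ∧ rk M L₁ = 2 ∧
  Disjoint T₀ T₁ ∧ Disjoint T₀ L₀ ∧ Disjoint T₀ L₁ ∧
  Disjoint T₁ L₀ ∧ Disjoint T₁ L₁ ∧ Disjoint L₀ L₁ ∧
  rk M (T₀ ∪ T₁ ∪ L₀) = 4 ∧ rk M (T₀ ∪ T₁ ∪ L₁) = 4 ∧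
  rk M (T₀ ∪ L₀ ∪ L₁) = 4 ∧ rk M (T₁ ∪ L₀ ∪ L₁) = 4 ∧
  rk M (T₀ ∪ T₁) = 3 ∧
  rk M (T₀ ∪ L₀) = 3 ∧ rk M (T₀ ∪ L₁) = 3 ∧
  rk M (T₁ ∪ L₀) = 3 ∧ rk M (T₁ ∪ L₁) = 3 ∧
  rk M (L₀ ∪ L₁) = 4

/-- The modular defect of a matroid: the sum of the modular defects of all
unordered pairs of flats (the sum over ordered pairs is twice this). -/
noncomputable def matroidDefect (M : Matroid α) : ℕ :=
  (∑ᶠ F ∈ {F | M.IsFlat F}, ∑ᶠ L ∈ {L | M.IsFlat L}, pairDefect M F L) / 2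

/-!
In rank 4, hypermodularity forces a non-modular pair of flats to be two disjoint lines spanning a
plane, or a disjoint line and plane. So if `𝓜` contains such a pair and a flat of rank at most one,
intersecting (modularly) brings `∅ = cl ∅` into `𝓜`. If `𝓜` has no flat of rank at most one, two
lines of `𝓜` that meet coincide, two planes of `𝓜` meet in a line of `𝓜`, and, starting from two
lines of `𝓜`, intersecting planes spanned by lines and points yields a line of `𝓜` through every
point. Every flat of `𝓜` then contains a line of the cut generated by any non-modular pair, and the
lines of `𝓜` partition `E`. Conversely, if `cl ∅ ∈ 𝓜` then `𝓜` holds all flats, among them two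
distinct lines through a common point.
-/

section General

variable {M : Matroid α} {X Y F L : Set α} {e : α} {𝓜 : Set (Set α)}

lemma _root_.Matroid.IsFlat.inter (hF : M.IsFlat F) (hL : M.IsFlat L) : M.IsFlat (F ∩ L) := by
  rw [inter_eq_iInter]
  exact IsFlat.iInter fun b => by cases b <;> assumption

lemma modularPair_iff_le :
    ModularPair M X Y ↔ rk M X + rk M Y ≤ rk M (X ∪ Y) + rk M (X ∩ Y) := by
  rw [ModularPair, pairDefect, Nat.sub_sub, Nat.sub_eq_zero_iff_le]

lemma ModularPair.symm (h : ModularPair M X Y) : ModularPair M Y X := by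
  rw [modularPair_iff_le, union_comm, inter_comm, add_comm]
  exact modularPair_iff_le.1 h

lemma modularPair_of_subset (h : X ⊆ Y) : ModularPair M X Y := by
  rw [modularPair_iff_le, union_eq_right.2 h, inter_eq_left.2 h, add_comm]

namespace ModularCut

lemma isFlat (hcut : ModularCut M 𝓜) (hF : F ∈ 𝓜) : M.IsFlat F :=
  hcut.1 F hF

lemma superset_mem (hcut : ModularCut M 𝓜) (hF : F ∈ 𝓜) (hL : M.IsFlat L) (hFL : F ⊆ L) :
    L ∈ 𝓜 :=
  hcut.2.1 F hF L hL hFL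

lemma inter_mem (hcut : ModularCut M 𝓜) (hF : F ∈ 𝓜) (hL : L ∈ 𝓜) (h : ModularPair M F L) :
    F ∩ L ∈ 𝓜 :=
  hcut.2.2 F hF L hL h

lemma closure_mem (hcut : ModularCut M 𝓜) (hF : F ∈ 𝓜) (hFX : F ⊆ X) (hX : X ⊆ M.E) :
    M.closure X ∈ 𝓜 :=
  hcut.superset_mem hF (M.isFlat_closure X) (hFX.trans (M.subset_closure X hX))

lemma closure_insert_mem (hcut : ModularCut M 𝓜) (hF : F ∈ 𝓜) (he : e ∈ M.E) :
    M.closure (insert e F) ∈ 𝓜 :=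
  hcut.closure_mem hF (subset_insert e F) (insert_subset he (hcut.isFlat hF).subset_ground)

lemma principalCut_of_closure_empty_mem (hcut : ModularCut M 𝓜) (h : M.closure ∅ ∈ 𝓜) :
    PrincipalCut M 𝓜 :=
  ⟨M.closure ∅, M.isFlat_closure ∅, Set.ext fun _ =>
    ⟨fun hL => ⟨hcut.isFlat hL, (hcut.isFlat hL).loops_subset⟩,
      fun hL => hcut.superset_mem h hL.1 hL.2⟩⟩

end ModularCut

lemma modularCut_setOf_isFlat (M : Matroid α) : ModularCut M {F | M.IsFlat F} :=
  ⟨fun _ h => h, fun _ _ _ hF _ => hF, fun _ hF _ hL _ => hF.inter hL⟩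

lemma modularCut_genCut {S : Set (Set α)} (hS : ∀ F ∈ S, M.IsFlat F) :
    ModularCut M (genCut M S) :=
  ⟨fun _ hF => hF _ ⟨modularCut_setOf_isFlat M, hS⟩,
    fun _ hL _ hF hLF 𝓝 h𝓝 => h𝓝.1.superset_mem (hL 𝓝 h𝓝) hF hLF,
    fun _ hF _ hL hmp 𝓝 h𝓝 => h𝓝.1.inter_mem (hF 𝓝 h𝓝) (hL 𝓝 h𝓝) hmp⟩

lemma subset_genCut (M : Matroid α) (S : Set (Set α)) : S ⊆ genCut M S :=
  fun _ hX _ h𝓝 => h𝓝.2 hX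

lemma genCut_subset {S : Set (Set α)} (hcut : ModularCut M 𝓜) (hS : S ⊆ 𝓜) :
    genCut M S ⊆ 𝓜 :=
  sInter_subset_of_mem ⟨hcut, hS⟩

end General

section Rank

variable {M : Matroid α} [M.RankFinite] {X Y F L : Set α} {e : α}

lemma cast_rk_eq_eRk (X : Set α) : (rk M X : ℕ∞) = M.eRk X := by
  obtain ⟨I, hI⟩ := M.exists_isBasis' X
  have hIfin : I.Finite := hI.indep.finite
  have hmax : IsGreatest {n | ∃ J, M.Indep J ∧ J ⊆ X ∧ J.ncard = n} I.ncard := by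
    refine ⟨⟨I, hI.indep, hI.subset, rfl⟩, ?_⟩
    rintro _ ⟨J, hJ, hJX, rfl⟩
    have hJI : J.encard ≤ I.encard := hI.encard_eq_eRk ▸ hJ.encard_le_eRk_of_subset hJX
    rw [← hJ.finite.cast_ncard_eq, ← hIfin.cast_ncard_eq] at hJI
    exact_mod_cast hJI
  rw [rk, hmax.csSup_eq, hIfin.cast_ncard_eq, hI.encard_eq_eRk]

lemma rk_le_rk_iff : rk M X ≤ rk M Y ↔ M.eRk X ≤ M.eRk Y := by
  rw [← Nat.cast_le (α := ℕ∞), cast_rk_eq_eRk, cast_rk_eq_eRk]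

lemma rk_mono (h : X ⊆ Y) : rk M X ≤ rk M Y :=
  rk_le_rk_iff.2 (M.eRk_mono h)

@[simp] lemma rk_empty : rk M ∅ = 0 := by
  exact_mod_cast (cast_rk_eq_eRk (M := M) ∅).trans M.eRk_empty

@[simp] lemma rk_closure_eq (X : Set α) : rk M (M.closure X) = rk M X := by
  exact_mod_cast (cast_rk_eq_eRk _).trans ((M.eRk_closure_eq X).trans (cast_rk_eq_eRk X).symm)

lemma rk_le_rkM (X : Set α) : rk M X ≤ rkM M := by
  rw [rkM, rk_le_rk_iff, eRk_ground]
  exact M.eRk_le_eRank X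

lemma rk_inter_add_rk_union_le (X Y : Set α) :
    rk M (X ∩ Y) + rk M (X ∪ Y) ≤ rk M X + rk M Y := by
  have h := M.eRk_inter_add_eRk_union_le X Y
  simp only [← cast_rk_eq_eRk] at h
  exact_mod_cast h

lemma rk_insert_of_notMem_closure (he : e ∈ M.E) (heX : e ∉ M.closure X) :
    rk M (insert e X) = rk M X + 1 := by
  have h := M.eRk_insert_eq_add_one (X := X) ⟨he, heX⟩
  rw [← cast_rk_eq_eRk, ← cast_rk_eq_eRk] at h
  exact_mod_cast h

lemma subset_closure_of_rk_le (hXY : X ⊆ Y) (hY : Y ⊆ M.E) (h : rk M Y ≤ rk M X) :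
    Y ⊆ M.closure X := by
  rw [(M.isRkFinite_set X).closure_eq_closure_of_subset_of_eRk_ge_eRk hXY (rk_le_rk_iff.1 h)]
  exact M.subset_closure Y hY

lemma rk_lt_rk_of_not_subset_closure (hXY : X ⊆ Y) (hY : Y ⊆ M.E) (h : ¬ Y ⊆ M.closure X) :
    rk M X < rk M Y :=
  lt_of_not_ge fun h' => h (subset_closure_of_rk_le hXY hY h')

lemma exists_mem_ground_notMem_closure (h : rk M X < rkM M) : ∃ e ∈ M.E, e ∉ M.closure X := by
  by_contra! hE
  have := rk_mono (M := M) hE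
  rw [rk_closure_eq] at this
  exact absurd h (not_lt.2 this)

lemma nonempty_of_rk_pos (h : 0 < rk M X) : X.Nonempty :=
  nonempty_iff_ne_empty.2 (by rintro rfl; simp at h)

lemma eq_of_subset_of_rk_le (hF : M.IsFlat F) (hFL : F ⊆ L) (hL : L ⊆ M.E)
    (h : rk M L ≤ rk M F) : F = L :=
  hFL.antisymm (hF.closure ▸ subset_closure_of_rk_le hFL hL h)

lemma rk_lt_rk_union_of_not_subset (hL : M.IsFlat L) (hF : F ⊆ M.E) (h : ¬ F ⊆ L) :
    rk M L < rk M (F ∪ L) :=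
  rk_lt_rk_of_not_subset_closure subset_union_right (union_subset hF hL.subset_ground)
    fun h' => h (subset_union_left.trans (h'.trans_eq hL.closure))

lemma eq_empty_of_rk_eq_zero [M.Loopless] (hF : F ⊆ M.E) (h : rk M F = 0) : F = ∅ := by
  have := subset_closure_of_rk_le (empty_subset F) hF (by simp [h])
  rwa [← loops, loops_eq_empty, subset_empty_iff] at this

lemma rk_closure_insert_of_notMem (hF : M.IsFlat F) (he : e ∈ M.E) (heF : e ∉ F) :
    rk M (M.closure (insert e F)) = rk M F + 1 := by
  rw [rk_closure_eq, rk_insert_of_notMem_closure he (by rwa [hF.closure])]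

lemma modularPair_of_rk_le_one (hL : M.IsFlat L) (hF : F ⊆ M.E) (h : rk M F ≤ 1) :
    ModularPair M F L := by
  by_cases hFL : F ⊆ L
  · exact modularPair_of_subset hFL
  have := rk_lt_rk_union_of_not_subset hL hF hFL
  rw [modularPair_iff_le]
  omega

end Rank

section NonModularPair

variable {M : Matroid α} [M.RankFinite] {F L : Set α}

lemma two_le_rk_of_not_modularPair (hL : M.IsFlat L) (hF : F ⊆ M.E)
    (h : ¬ ModularPair M F L) : 2 ≤ rk M F := by
  by_contra! h'
  exact h (modularPair_of_rk_le_one hL hF (by omega))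

lemma rk_lt_rkM_of_not_modularPair (hF : M.IsFlat F) (hL : L ⊆ M.E)
    (h : ¬ ModularPair M F L) : rk M F < rkM M := by
  by_contra! h'
  have hFE : F = M.E := eq_of_subset_of_rk_le hF hF.subset_ground subset_rfl h'
  exact h (modularPair_of_subset (hFE ▸ hL)).symm

lemma rk_eq_two_or_rk_eq_two_of_not_modularPair (hrk : rkM M = 4) (hhm : Hypermodular M)
    (hF : M.IsFlat F) (hL : M.IsFlat L) (h : ¬ ModularPair M F L) :
    rk M F = 2 ∨ rk M L = 2 := by
  have := two_le_rk_of_not_modularPair hL hF.subset_ground h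
  have := two_le_rk_of_not_modularPair hF hL.subset_ground (mt ModularPair.symm h)
  have := rk_lt_rkM_of_not_modularPair hF hL.subset_ground h
  have := rk_lt_rkM_of_not_modularPair hL hF.subset_ground (mt ModularPair.symm h)
  by_contra! h'
  exact h (hhm F L hF hL (by omega) (by omega))

lemma disjoint_of_not_modularPair [M.Loopless] (hrk : rkM M = 4) (hhm : Hypermodular M)
    (hF : M.IsFlat F) (hL : M.IsFlat L) (h : ¬ ModularPair M F L) : Disjoint F L := by
  have hFL := rk_lt_rk_union_of_not_subset hL hF.subset_ground
    fun h' => h (modularPair_of_subset h')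
  have hLF := rk_lt_rk_union_of_not_subset hF hL.subset_ground
    fun h' => h (modularPair_of_subset h').symm
  rw [union_comm] at hLF
  have hdefect : rk M (F ∪ L) + rk M (F ∩ L) < rk M F + rk M L :=
    not_le.1 (mt modularPair_iff_le.2 h)
  have := rk_eq_two_or_rk_eq_two_of_not_modularPair hrk hhm hF hL h
  rw [disjoint_iff_inter_eq_empty]
  exact eq_empty_of_rk_eq_zero (inter_subset_left.trans hF.subset_ground) (by omega)

lemma exists_isFlat_rk_eq_two_not_disjoint (h : 3 ≤ rkM M) :
    ∃ L₁ L₂, M.IsFlat L₁ ∧ M.IsFlat L₂ ∧ rk M L₁ = 2 ∧ rk M L₂ = 2 ∧ L₁ ≠ L₂ ∧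
      ¬ Disjoint L₁ L₂ := by
  obtain ⟨a, ha, ha0⟩ := exists_mem_ground_notMem_closure (M := M) (X := ∅) (by simp; omega)
  have ha1 : rk M {a} = 1 := by simpa using rk_insert_of_notMem_closure ha ha0
  obtain ⟨b, hb, hba⟩ := exists_mem_ground_notMem_closure (M := M) (X := {a}) (by omega)
  have hab : rk M {b, a} = 2 := by rw [rk_insert_of_notMem_closure hb hba, ha1]
  obtain ⟨c, hc, hcab⟩ := exists_mem_ground_notMem_closure (M := M) (X := {b, a}) (by omega)
  have hca : c ∉ M.closure {a} := fun h => hcab (M.closure_subset_closure (subset_insert b {a}) h)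
  refine ⟨M.closure {b, a}, M.closure {c, a}, M.isFlat_closure _, M.isFlat_closure _,
    by rw [rk_closure_eq, hab], by rw [rk_closure_eq, rk_insert_of_notMem_closure hc hca, ha1],
    fun h => hcab (h ▸ M.mem_closure_of_mem' (mem_insert c {a}) hc), ?_⟩
  exact not_disjoint_iff.2 ⟨a, M.mem_closure_of_mem' (mem_insert_of_mem b rfl) ha,
    M.mem_closure_of_mem' (mem_insert_of_mem c rfl) ha⟩

end NonModularPair

namespace ModularCut

variable {M : Matroid α} [M.RankFinite] {X Y Z F L : Set α} {e : α} {𝓜 𝓝 : Set (Set α)}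

lemma inter_mem_of_rk_eq_three (hcut : ModularCut M 𝓜) (hrk : rkM M = 4)
    (hhm : Hypermodular M) (hF : F ∈ 𝓜) (hL : L ∈ 𝓜) (hF3 : rk M F = 3) (hL3 : rk M L = 3)
    (hne : F ≠ L) : F ∩ L ∈ 𝓜 ∧ rk M (F ∩ L) = 2 := by
  have hmp := hhm F L (hcut.isFlat hF) (hcut.isFlat hL) (by omega) (by omega)
  refine ⟨hcut.inter_mem hF hL hmp, ?_⟩
  have hFL : ¬ F ⊆ L := fun h =>
    hne (eq_of_subset_of_rk_le (hcut.isFlat hF) h (hcut.isFlat hL).subset_ground (by omega))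
  have := rk_lt_rk_union_of_not_subset (hcut.isFlat hL) (hcut.isFlat hF).subset_ground hFL
  have := rk_le_rkM (M := M) (F ∪ L)
  have := rk_inter_add_rk_union_le (M := M) F L
  rw [modularPair_iff_le] at hmp
  omega

variable [M.Loopless]

lemma inter_mem_of_not_disjoint (hcut : ModularCut M 𝓜) (hrk : rkM M = 4)
    (hhm : Hypermodular M) (hF : F ∈ 𝓜) (hL : L ∈ 𝓜) (hFL : ¬ Disjoint F L) : F ∩ L ∈ 𝓜 :=
  hcut.inter_mem hF hL <|
    not_not.1 (mt (disjoint_of_not_modularPair hrk hhm (hcut.isFlat hF) (hcut.isFlat hL)) hFL)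

lemma subset_of_rk_eq_two (hcut : ModularCut M 𝓜) (hrk : rkM M = 4) (hhm : Hypermodular M)
    (h𝓜 : ∀ F ∈ 𝓜, 2 ≤ rk M F) (hL : L ∈ 𝓜) (hF : F ∈ 𝓜) (hL2 : rk M L = 2)
    (hLF : ¬ Disjoint L F) : L ⊆ F := by
  have hmem := hcut.inter_mem_of_not_disjoint hrk hhm hL hF hLF
  have := h𝓜 _ hmem
  have := rk_mono (M := M) (inter_subset_left : L ∩ F ⊆ L)
  have hinter : L ∩ F = L := eq_of_subset_of_rk_le (hcut.isFlat hmem) inter_subset_left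
    (hcut.isFlat hL).subset_ground (by omega)
  rw [← hinter]
  exact inter_subset_right

lemma disjoint_of_rk_eq_two (hcut : ModularCut M 𝓜) (hrk : rkM M = 4) (hhm : Hypermodular M)
    (h𝓜 : ∀ F ∈ 𝓜, 2 ≤ rk M F) (hF : F ∈ 𝓜) (hL : L ∈ 𝓜) (hF2 : rk M F = 2)
    (hL2 : rk M L = 2) (hne : F ≠ L) : Disjoint F L := by
  by_contra hFL
  exact hne (eq_of_subset_of_rk_le (hcut.isFlat hF)
    (hcut.subset_of_rk_eq_two hrk hhm h𝓜 hF hL hF2 hFL) (hcut.isFlat hL).subset_ground (by omega))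

lemma rk_union_eq_three (hcut : ModularCut M 𝓜) (hrk : rkM M = 4) (hhm : Hypermodular M)
    (h𝓜 : ∀ F ∈ 𝓜, 2 ≤ rk M F) (hF : F ∈ 𝓜) (hL : L ∈ 𝓜) (hF2 : rk M F = 2)
    (hL2 : rk M L = 2) (hne : F ≠ L) : rk M (F ∪ L) = 3 := by
  have hFL : F ∩ L = ∅ :=
    disjoint_iff_inter_eq_empty.1 (hcut.disjoint_of_rk_eq_two hrk hhm h𝓜 hF hL hF2 hL2 hne)
  have hFnL : ¬ F ⊆ L := fun h => by
    rw [inter_eq_left.2 h] at hFL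
    simp [hFL] at hF2
  have := rk_lt_rk_union_of_not_subset (hcut.isFlat hL) (hcut.isFlat hF).subset_ground hFnL
  have := rk_le_rkM (M := M) (F ∪ L)
  by_contra hne3
  have hmp : ModularPair M F L := by rw [modularPair_iff_le]; omega
  have := h𝓜 _ (hcut.inter_mem hF hL hmp)
  simp [hFL] at this

lemma exists_rk_eq_two_mem_of_notMem_closure (hcut : ModularCut M 𝓜) (hrk : rkM M = 4)
    (hhm : Hypermodular M) (h𝓜 : ∀ F ∈ 𝓜, 2 ≤ rk M F) (hY : Y ∈ 𝓜) (hZ : Z ∈ 𝓜)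
    (hY2 : rk M Y = 2) (hZ2 : rk M Z = 2) (hYZ : Y ≠ Z) (he : e ∈ M.E)
    (heYZ : e ∉ M.closure (Y ∪ Z)) : ∃ L ∈ 𝓜, rk M L = 2 ∧ e ∈ L := by
  have hYf := hcut.isFlat hY
  have hZf := hcut.isFlat hZ
  have hYZE : Y ∪ Z ⊆ M.E := union_subset hYf.subset_ground hZf.subset_ground
  have heY : e ∉ Y := fun h => heYZ (M.mem_closure_of_mem (Or.inl h) hYZE)
  have heZ : e ∉ Z := fun h => heYZ (M.mem_closure_of_mem (Or.inr h) hYZE)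
  have hH₁ : rk M (M.closure (insert e Y)) = 3 := by
    rw [rk_closure_insert_of_notMem hYf he heY, hY2]
  have hH₂ : rk M (M.closure (insert e Z)) = 3 := by
    rw [rk_closure_insert_of_notMem hZf he heZ, hZ2]
  have hne : M.closure (insert e Y) ≠ M.closure (insert e Z) := by
    intro h
    have hsub : insert e (Y ∪ Z) ⊆ M.closure (insert e Y) := by
      rw [insert_union_distrib]
      exact union_subset (M.subset_closure _ (insert_subset he hYf.subset_ground))
        (h ▸ M.subset_closure _ (insert_subset he hZf.subset_ground))
    have := rk_mono (M := M) hsub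
    rw [rk_insert_of_notMem_closure he heYZ, hcut.rk_union_eq_three hrk hhm h𝓜 hY hZ hY2 hZ2 hYZ,
      hH₁] at this
    omega
  obtain ⟨hmem, h2⟩ := hcut.inter_mem_of_rk_eq_three hrk hhm (hcut.closure_insert_mem hY he)
    (hcut.closure_insert_mem hZ he) hH₁ hH₂ hne
  exact ⟨_, hmem, h2, M.mem_closure_of_mem' (mem_insert e Y) he,
    M.mem_closure_of_mem' (mem_insert e Z) he⟩

lemma exists_rk_eq_two_mem_ne (hcut : ModularCut M 𝓜) (hrk : rkM M = 4) (hhm : Hypermodular M)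
    (hX : X ∈ 𝓜) (hY : Y ∈ 𝓜) (hXY : ¬ ModularPair M X Y) :
    ∃ L₁ ∈ 𝓜, ∃ L₂ ∈ 𝓜, rk M L₁ = 2 ∧ rk M L₂ = 2 ∧ L₁ ≠ L₂ := by
  have hXf := hcut.isFlat hX
  have hYf := hcut.isFlat hY
  wlog hX2 : rk M X = 2 generalizing X Y
  · exact this hY hX (mt ModularPair.symm hXY) hYf hXf
      ((rk_eq_two_or_rk_eq_two_of_not_modularPair hrk hhm hXf hYf hXY).resolve_left hX2)
  by_cases hY2 : rk M Y = 2
  · exact ⟨X, hX, Y, hY, hX2, hY2, fun h => hXY (modularPair_of_subset h.subset)⟩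
  have hY3 : rk M Y = 3 := by
    have := two_le_rk_of_not_modularPair hXf hYf.subset_ground (mt ModularPair.symm hXY)
    have := rk_lt_rkM_of_not_modularPair hYf hXf.subset_ground (mt ModularPair.symm hXY)
    omega
  -- the plane spanned by `X` and a point of `Y` meets `Y` in a second line
  have hd := disjoint_of_not_modularPair hrk hhm hXf hYf hXY
  obtain ⟨g, hg⟩ := nonempty_of_rk_pos (M := M) (X := Y) (by omega)
  obtain ⟨x, hx⟩ := nonempty_of_rk_pos (M := M) (X := X) (by omega)
  have hgE := hYf.subset_ground hg
  have hH3 : rk M (M.closure (insert g X)) = 3 := by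
    rw [rk_closure_insert_of_notMem hXf hgE (disjoint_right.1 hd hg), hX2]
  have hxH : x ∈ M.closure (insert g X) :=
    M.mem_closure_of_mem' (mem_insert_of_mem g hx) (hXf.subset_ground hx)
  have hYH : Y ≠ M.closure (insert g X) := fun h => disjoint_left.1 hd hx (h ▸ hxH)
  obtain ⟨hmem, h2⟩ :=
    hcut.inter_mem_of_rk_eq_three hrk hhm hY (hcut.closure_insert_mem hX hgE) hY3 hH3 hYH
  exact ⟨X, hX, _, hmem, hX2, h2, fun h => disjoint_left.1 hd hx (h ▸ hx).1⟩

lemma exists_rk_eq_two_mem (hcut : ModularCut M 𝓜) (hrk : rkM M = 4) (hhm : Hypermodular M)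
    (h𝓜 : ∀ F ∈ 𝓜, 2 ≤ rk M F) (hY : Y ∈ 𝓜) (hZ : Z ∈ 𝓜) (hY2 : rk M Y = 2)
    (hZ2 : rk M Z = 2) (hYZ : Y ≠ Z) (he : e ∈ M.E) : ∃ L ∈ 𝓜, rk M L = 2 ∧ e ∈ L := by
  have hYZ3 := hcut.rk_union_eq_three hrk hhm h𝓜 hY hZ hY2 hZ2 hYZ
  have hYZE : Y ∪ Z ⊆ M.E :=
    union_subset (hcut.isFlat hY).subset_ground (hcut.isFlat hZ).subset_ground
  by_cases heP : e ∉ M.closure (Y ∪ Z)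
  · exact hcut.exists_rk_eq_two_mem_of_notMem_closure hrk hhm h𝓜 hY hZ hY2 hZ2 hYZ he heP
  by_cases heY : e ∈ Y
  · exact ⟨Y, hY, hY2, heY⟩
  -- a line `W` of `𝓜` off the plane `P = cl (Y ∪ Z)` spans with `Y` a plane meeting `P` in `Y`
  obtain ⟨f, hf, hfP⟩ := exists_mem_ground_notMem_closure (M := M) (X := Y ∪ Z) (by omega)
  obtain ⟨W, hW, hW2, hfW⟩ :=
    hcut.exists_rk_eq_two_mem_of_notMem_closure hrk hhm h𝓜 hY hZ hY2 hZ2 hYZ hf hfP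
  have hYP : Y ⊆ M.closure (Y ∪ Z) := M.subset_closure_of_subset' subset_union_left
  have hWY : W ≠ Y := fun h => hfP (hYP (h ▸ hfW))
  have hWYE : W ∪ Y ⊆ M.E :=
    union_subset (hcut.isFlat hW).subset_ground (hcut.isFlat hY).subset_ground
  have hPQ : M.closure (Y ∪ Z) ≠ M.closure (W ∪ Y) := fun h =>
    hfP (h ▸ M.mem_closure_of_mem (Or.inl hfW) hWYE)
  obtain ⟨-, hPQ2⟩ := hcut.inter_mem_of_rk_eq_three hrk hhm
    (hcut.closure_mem hY subset_union_left hYZE) (hcut.closure_mem hW subset_union_left hWYE)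
    (by rw [rk_closure_eq, hYZ3])
    (by rw [rk_closure_eq, hcut.rk_union_eq_three hrk hhm h𝓜 hW hY hW2 hY2 hWY]) hPQ
  have hYPQ : Y = M.closure (Y ∪ Z) ∩ M.closure (W ∪ Y) :=
    eq_of_subset_of_rk_le (hcut.isFlat hY)
      (subset_inter hYP (M.subset_closure_of_subset' subset_union_right))
      (inter_subset_left.trans (M.closure_subset_ground _)) (by omega)
  exact hcut.exists_rk_eq_two_mem_of_notMem_closure hrk hhm h𝓜 hW hY hW2 hY2 hWY he
    fun heQ => heY (hYPQ ▸ ⟨not_not.1 heP, heQ⟩)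

lemma empty_mem_of_rk_le_one (hcut : ModularCut M 𝓜) (hrk : rkM M = 4) (hhm : Hypermodular M)
    (hX : X ∈ 𝓜) (hY : Y ∈ 𝓜) (hXY : ¬ ModularPair M X Y) (hF : F ∈ 𝓜)
    (hF1 : rk M F ≤ 1) : ∅ ∈ 𝓜 := by
  have hFE := (hcut.isFlat hF).subset_ground
  have hFX : F ∩ X ∈ 𝓜 :=
    hcut.inter_mem hF hX (modularPair_of_rk_le_one (hcut.isFlat hX) hFE hF1)
  have hFXY : F ∩ X ∩ Y ∈ 𝓜 := hcut.inter_mem hFX hY <| modularPair_of_rk_le_one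
    (hcut.isFlat hY) (inter_subset_left.trans hFE) ((rk_mono inter_subset_left).trans hF1)
  rwa [inter_assoc, disjoint_iff_inter_eq_empty.1 (disjoint_of_not_modularPair hrk hhm
    (hcut.isFlat hX) (hcut.isFlat hY) hXY), inter_empty] at hFXY

lemma eq_of_subset (h𝓝 : ModularCut M 𝓝) (hcut : ModularCut M 𝓜) (h𝓝𝓜 : 𝓝 ⊆ 𝓜)
    (hrk : rkM M = 4) (hhm : Hypermodular M) (h𝓜 : ∀ F ∈ 𝓜, 2 ≤ rk M F) (hY : Y ∈ 𝓝)
    (hZ : Z ∈ 𝓝) (hY2 : rk M Y = 2) (hZ2 : rk M Z = 2) (hYZ : Y ≠ Z) : 𝓝 = 𝓜 := by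
  refine h𝓝𝓜.antisymm fun F hF => ?_
  obtain ⟨e, he⟩ := nonempty_of_rk_pos (M := M) (X := F) (by have := h𝓜 F hF; omega)
  obtain ⟨L, hL, hL2, heL⟩ := h𝓝.exists_rk_eq_two_mem hrk hhm (fun G hG => h𝓜 G (h𝓝𝓜 hG))
    hY hZ hY2 hZ2 hYZ ((hcut.isFlat hF).subset_ground he)
  exact h𝓝.superset_mem hL (hcut.isFlat hF) <|
    hcut.subset_of_rk_eq_two hrk hhm h𝓜 (h𝓝𝓜 hL) hF hL2 (not_disjoint_iff.2 ⟨e, heL, he⟩)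

lemma eq_genCut (hcut : ModularCut M 𝓜) (hrk : rkM M = 4) (hhm : Hypermodular M)
    (h𝓜 : ∀ F ∈ 𝓜, 2 ≤ rk M F) (hX : X ∈ 𝓜) (hY : Y ∈ 𝓜) (hXY : ¬ ModularPair M X Y) :
    𝓜 = genCut M {X, Y} := by
  have hG : ModularCut M (genCut M {X, Y}) :=
    modularCut_genCut (by rintro F (rfl | rfl) <;> exact hcut.isFlat ‹_›)
  obtain ⟨L₁, hL₁, L₂, hL₂, h₁, h₂, hne⟩ := hG.exists_rk_eq_two_mem_ne hrk hhm
    (subset_genCut M _ (mem_insert X {Y})) (subset_genCut M _ (mem_insert_of_mem X rfl)) hXY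
  exact (hG.eq_of_subset hcut (genCut_subset hcut (pair_subset hX hY)) hrk hhm h𝓜 hL₁ hL₂ h₁ h₂
    hne).symm

end ModularCut

lemma not_principalCut {M : Matroid α} [M.RankFinite] [M.Loopless] {𝓜 : Set (Set α)}
    {X Y : Set α} (hrk : rkM M = 4) (hhm : Hypermodular M) (h𝓜 : ∀ F ∈ 𝓜, 2 ≤ rk M F) (hX : X ∈ 𝓜)
    (hY : Y ∈ 𝓜) (hXY : ¬ ModularPair M X Y) : ¬ PrincipalCut M 𝓜 := by
  rintro ⟨F, hF, rfl⟩
  have hFXY : F ⊆ X ∩ Y := subset_inter hX.2 hY.2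
  rw [disjoint_iff_inter_eq_empty.1 (disjoint_of_not_modularPair hrk hhm hX.1 hY.1 hXY),
    subset_empty_iff] at hFXY
  have := h𝓜 F ⟨hF, subset_rfl⟩
  simp [hFXY] at this

theorem statement_7_general {α : Type*} (M : Matroid α) (hfin : M.E.Finite)
    (hrk : rkM M = 4) (hloopless : M.closure ∅ = ∅) (hhm : Hypermodular M)
    (𝓜 : Set (Set α)) (hcut : ModularCut M 𝓜)
    (hpair : ∃ X Y : Set α, X ∈ 𝓜 ∧ Y ∈ 𝓜 ∧ ¬ ModularPair M X Y) :
    List.TFAE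
      [ M.closure ∅ ∉ 𝓜,
        ¬ PrincipalCut M 𝓜 ∧ ∀ X Y : Set α, X ∈ 𝓜 → Y ∈ 𝓜 →
          ¬ ModularPair M X Y → 𝓜 = genCut M {X, Y},
        ∀ F ∈ 𝓜, ¬ rk M F ≤ 1,
        (∀ T ∈ 𝓜, ∀ T' ∈ 𝓜, rk M T = 2 → rk M T' = 2 → T ≠ T' →
          Disjoint T T') ∧ ⋃₀ {T | T ∈ 𝓜 ∧ rk M T = 2} = M.E ] := by
  have : M.Finite := ⟨hfin⟩
  have : M.Loopless := ⟨hloopless⟩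
  obtain ⟨X, Y, hX, hY, hXY⟩ := hpair
  tfae_have 1 → 3 := fun hproper F hF hF1 =>
    hproper (by rw [hloopless]; exact hcut.empty_mem_of_rk_le_one hrk hhm hX hY hXY hF hF1)
  tfae_have 3 → 2 := fun h3 =>
    ⟨not_principalCut hrk hhm (fun F hF => not_le.1 (h3 F hF)) hX hY hXY,
      fun _ _ hX' hY' h => hcut.eq_genCut hrk hhm (fun F hF => not_le.1 (h3 F hF)) hX' hY' h⟩
  tfae_have 2 → 1 := fun ⟨hnp, _⟩ h0 => hnp (hcut.principalCut_of_closure_empty_mem h0)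
  tfae_have 3 → 4 := by
    intro h3
    have h𝓜 : ∀ F ∈ 𝓜, 2 ≤ rk M F := fun F hF => not_le.1 (h3 F hF)
    obtain ⟨L₁, hL₁, L₂, hL₂, h₁, h₂, hne⟩ := hcut.exists_rk_eq_two_mem_ne hrk hhm hX hY hXY
    refine ⟨fun T hT T' hT' => hcut.disjoint_of_rk_eq_two hrk hhm h𝓜 hT hT',
      (sUnion_subset fun T hT => (hcut.isFlat hT.1).subset_ground).antisymm fun e he => ?_⟩
    obtain ⟨L, hL, hL2, heL⟩ := hcut.exists_rk_eq_two_mem hrk hhm h𝓜 hL₁ hL₂ h₁ h₂ hne he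
    exact ⟨L, ⟨hL, hL2⟩, heL⟩
  tfae_have 4 → 1 := by
    rintro ⟨hdisj, -⟩ h0
    obtain ⟨L₁, L₂, hL₁, hL₂, h₁, h₂, hne, hmeet⟩ :=
      exists_isFlat_rk_eq_two_not_disjoint (M := M) (by omega)
    exact hmeet (hdisj L₁ (hcut.superset_mem h0 hL₁ hL₁.loops_subset)
      L₂ (hcut.superset_mem h0 hL₂ hL₂.loops_subset) h₁ h₂ hne)
  tfae_finish

/-- Let M be a finite rank-4 loopless hypermodular non-modular
matroid and 𝓜 a modular cut containing a non-modular pair of flats. TFAE: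
(1) 𝓜 is proper; (2) 𝓜 is non-principal and is generated by every non-modular
pair of flats in it; (3) 𝓜 has no flat of rank ≤ 1; (4) the rank-2 flats in 𝓜
partition E(M). -/
theorem statement_7 {α : Type*} (M : Matroid α) (hfin : M.E.Finite)
    (hrk : rkM M = 4) (hloopless : M.closure ∅ = ∅) (hhm : Hypermodular M)
    (hnonmod : ¬ Modular M)
    (𝓜 : Set (Set α)) (hcut : ModularCut M 𝓜)
    (hpair : ∃ X Y : Set α, X ∈ 𝓜 ∧ Y ∈ 𝓜 ∧ ¬ ModularPair M X Y) :
    List.TFAE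
      [ M.closure ∅ ∉ 𝓜,
        ¬ PrincipalCut M 𝓜 ∧ ∀ X Y : Set α, X ∈ 𝓜 → Y ∈ 𝓜 →
          ¬ ModularPair M X Y → 𝓜 = genCut M {X, Y},
        ∀ F ∈ 𝓜, ¬ rk M F ≤ 1,
        (∀ T ∈ 𝓜, ∀ T' ∈ 𝓜, rk M T = 2 → rk M T' = 2 → T ≠ T' →
          Disjoint T T') ∧ ⋃₀ {T | T ∈ 𝓜 ∧ rk M T = 2} = M.E ] :=
  statement_7_general M hfin hrk hloopless hhm 𝓜 hcut hpair

end SMC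
end

section
/- Let M be a finite rank-4 matroid and let T₁, T₂, T₃ be rank-2 flats of M with r(T₁∪T₂∪T₃) = 4 and r(Tᵢ∪Tⱼ) = 3 for all i ≠ j. If T₁ ∩ T₂ ≠ ∅, then T₁ ∩ T₂ ⊆ T₃. -/
/-! Submodularity for `T₁ ∪ T₃` and `T₂ ∪ T₃` gives `r((T₁ ∪ T₃) ∩ (T₂ ∪ T₃)) ≤ 3 + 3 - 4 = r(T₃)`.
This intersection contains `T₃`, so it lies in the closure of the flat `T₃`, which is `T₃`
itself; and it contains `T₁ ∩ T₂`. -/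

open Set Matroid
open scoped Matroid

namespace SMC

variable {α : Type*}

variable {M : Matroid α} {F X Y : Set α}

lemma mem_rk_set_iff {n : ℕ} :
    n ∈ {n | ∃ I, M.Indep I ∧ I ⊆ X ∧ I.ncard = n} ↔ (n : ℕ∞) ≤ M.eRk X := by
  constructor
  · rintro ⟨I, hI, hIX, rfl⟩
    obtain hfin | hinf := I.finite_or_infinite
    · rw [hfin.cast_ncard_eq]
      exact hI.encard_le_eRk_of_subset hIX
    · simp [hinf.ncard]
  · intro hn
    obtain ⟨I, hIX, hI, hIn⟩ := le_eRk_iff.1 hn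
    exact ⟨I, hI, hIX, by rw [Set.ncard_def, hIn, ENat.toNat_natCast]⟩

/-- Both sides take the junk value `0` on sets of infinite rank. -/
lemma rk_eq_toNat_eRk (M : Matroid α) (X : Set α) : rk M X = (M.eRk X).toNat := by
  have hset : {n | ∃ I, M.Indep I ∧ I ⊆ X ∧ I.ncard = n} = {n : ℕ | (n : ℕ∞) ≤ M.eRk X} :=
    Set.ext fun _ ↦ mem_rk_set_iff
  rw [rk, hset]
  cases M.eRk X with
  | top => simp
  | coe m =>
    simp only [Nat.cast_le, ENat.toNat_natCast]
    exact csSup_Iic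

lemma eRk_eq_of_rk_eq {n : ℕ} (h : rk M X = n) (hn : n ≠ 0) : M.eRk X = n := by
  rwa [rk_eq_toNat_eRk, ENat.toNat_eq_iff hn] at h

lemma _root_.Matroid.IsFlat.closure_inter_eq (hF : M.IsFlat F) (hFX : F ⊆ X) (hFY : F ⊆ Y)
    (hXY : M.eRk (X ∪ Y) ≠ ⊤) (h : M.eRk X + M.eRk Y ≤ M.eRk F + M.eRk (X ∪ Y)) :
    M.closure (X ∩ Y) = F := by
  have hle : M.eRk (X ∩ Y) ≤ M.eRk F :=
    (WithTop.add_le_add_iff_right hXY).1 ((M.eRk_inter_add_eRk_union_le X Y).trans h)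
  have hFfin : M.IsRkFinite F :=
    eRk_ne_top_iff.1 (ne_top_of_le_ne_top hXY (M.eRk_mono (hFX.trans subset_union_left)))
  rw [← hFfin.closure_eq_closure_of_subset_of_eRk_ge_eRk (subset_inter hFX hFY) hle, hF.closure]

theorem statement_11_general {α : Type*} (M : Matroid α)
    (T₁ T₂ T₃ : Set α)
    (h₁ : M.IsFlat T₁) (h₃ : M.IsFlat T₃)
    (hr₃ : rk M T₃ = 2)
    (hall : rk M (T₁ ∪ T₂ ∪ T₃) = 4)
    (h₁₃ : rk M (T₁ ∪ T₃) = 3)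
    (h₂₃ : rk M (T₂ ∪ T₃) = 3) :
    T₁ ∩ T₂ ⊆ T₃ := by
  have hunion : (T₁ ∪ T₃) ∪ (T₂ ∪ T₃) = T₁ ∪ T₂ ∪ T₃ := (union_union_distrib_right ..).symm
  have hspan : M.closure ((T₁ ∪ T₃) ∩ (T₂ ∪ T₃)) = T₃ := by
    refine h₃.closure_inter_eq subset_union_right subset_union_right ?_ ?_ <;>
      simp only [hunion, eRk_eq_of_rk_eq hall four_ne_zero, eRk_eq_of_rk_eq h₁₃ three_ne_zero,
        eRk_eq_of_rk_eq h₂₃ three_ne_zero, eRk_eq_of_rk_eq hr₃ two_ne_zero]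
    · exact ENat.natCast_ne_top 4
    · norm_num
  intro x hx
  rw [← hspan]
  exact M.inter_ground_subset_closure _
    ⟨⟨.inl hx.1, .inl hx.2⟩, h₁.subset_ground hx.1⟩

/-- In a finite rank-4 matroid, if T₁, T₂, T₃ are rank-2 flats
with r(T₁ ∪ T₂ ∪ T₃) = 4 and r(Tᵢ ∪ Tⱼ) = 3 for i ≠ j, and T₁ ∩ T₂ ≠ ∅, then
T₁ ∩ T₂ ⊆ T₃. -/
theorem statement_11 {α : Type*} (M : Matroid α) (hfin : M.E.Finite)
    (hrk : rkM M = 4) (T₁ T₂ T₃ : Set α)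
    (h₁ : M.IsFlat T₁) (h₂ : M.IsFlat T₂) (h₃ : M.IsFlat T₃)
    (hr₁ : rk M T₁ = 2) (hr₂ : rk M T₂ = 2) (hr₃ : rk M T₃ = 2)
    (hall : rk M (T₁ ∪ T₂ ∪ T₃) = 4)
    (h₁₂ : rk M (T₁ ∪ T₂) = 3) (h₁₃ : rk M (T₁ ∪ T₃) = 3)
    (h₂₃ : rk M (T₂ ∪ T₃) = 3)
    (hne : (T₁ ∩ T₂).Nonempty) :
    T₁ ∩ T₂ ⊆ T₃ :=
  statement_11_general M T₁ T₂ T₃ h₁ h₃ hr₃ hall h₁₃ h₂₃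

end SMC
end
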